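/- Let C_* → D_* be a chain map of chain complexes of abelian groups and let Rel_* denote the homology of its mapping cone. Suppose there are long exact sequences ... → H_*(C) → H_*(D) → Rel_* → H_{*−1}(C) → ... fitting into a commutative ladder induced by a self-map of the pair (C,D) such that the induced map H_*(C) → H_*(D) in consecutive ladders agrees. Then the composition of two consecutive induced relative stabilization maps Rel_* → Rel_* → Rel_* is zero. Concretely: given a homotopy commutative square of chain maps with all four maps equal to a fixed map f : C_* → C_*, the induced endomorphism of H_*(cone(f)) squares to zero. -/
import Mathlib


/-- **Composition of two consecutive relative stabilization maps is zero.**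

Suppose we are given long exact sequences
`... → C n →[f n] C n →[g n] R n →[d n] C (n-1) →[f (n-1)] ...`
(so that `(f n, g n)`, `(g n, d n)` and `(d n, f (n-1))` are exact at each spot),
where `R` plays the role of the homology of the mapping cone of a self-map of a
chain complex and `f` is the induced map on homology.  Suppose moreover that
an endomorphism `φ` of `R` fits into a commutative ladder, i.e. it is
compatible with `f` through `g` and `d`.  Then the composition of two
consecutive induced relative maps `φ ∘ φ` is zero. -/
theorem rel_stabilization_comp_zero
    (C R : ℤ → Type*) [∀ n, AddCommGroup (C n)] [∀ n, AddCommGroup (R n)]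
    (f : ∀ n, C n →+ C n) (g : ∀ n, C n →+ R n) (d : ∀ n, R n →+ C (n - 1))
    (φ : ∀ n, R n →+ R n)
    (hfg : ∀ n, Function.Exact (f n) (g n))
    (hgd : ∀ n, Function.Exact (g n) (d n))
    (hdf : ∀ n, Function.Exact (d n) (f (n - 1)))
    (hcomm₁ : ∀ n (x : C n), g n (f n x) = φ n (g n x))
    (hcomm₂ : ∀ n (y : R n), d n (φ n y) = f (n - 1) (d n y)) :
    ∀ n (y : R n), φ n (φ n y) = 0 := by
  intro n y
  have h1 : f (n - 1) (d n y) = 0 := (hdf n).apply_apply_eq_zero y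
  have h2 : d n (φ n y) = 0 := by rw [hcomm₂ n y, h1]
  obtain ⟨x, hx⟩ := ((hgd n) (φ n y)).mp h2
  rw [← hx, ← hcomm₁ n x, (hfg n).apply_apply_eq_zero x]
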